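/- For every real α ≥ 0, every s > 0, every z > 0 and every x > 0, the limit as t → ∞ of (1/2) · (μ(s;α)² β(t;α) μ(t−s;α)) / (β(s;α)² μ(t;α) β(t−s;α)) · z x · e^{−z U(t,s;α)} · e^{−x(1/β(s;α) − 1/β(t;α))} equals (μ(s;α)/(2 β(s;α))) · x e^{−x/β(s;α)} · μ(s;α)² z e^{−z μ(s;α)}. (This is Theorem 10: the joint density of the time T₂ back to the MRCA and the contemporaneous population size X_MRCA for a Feller diffusion descended from a single founder infinitely far in the past, conditioned on current population x.) -/

import Mathlib

open MeasureTheory Real Filter Set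

/-- `muF t α` is the function μ(t;α) = 2α e^{αt}/(e^{αt} − 1) for α ≠ 0, and 2/t for α = 0. -/
noncomputable def muF (t α : ℝ) : ℝ :=
  if α = 0 then 2 / t else 2 * α * Real.exp (α * t) / (Real.exp (α * t) - 1)

/-- `betaF t α` is the function β(t;α) = (e^{αt} − 1)/(2α) for α ≠ 0, and t/2 for α = 0. -/
noncomputable def betaF (t α : ℝ) : ℝ :=
  if α = 0 then t / 2 else (Real.exp (α * t) - 1) / (2 * α)

/-- `UF t s α` = 1/β(t−s;α) + μ(s;α). -/
noncomputable def UF (t s α : ℝ) : ℝ := 1 / betaF (t - s) α + muF s α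

lemma betaF_pos {α t : ℝ} (hα : 0 ≤ α) (ht : 0 < t) : 0 < betaF t α := by
  rcases eq_or_lt_of_le hα with h | h
  · simp [betaF, ← h]; positivity
  · simp only [betaF, if_neg h.ne']
    have h1 : (1:ℝ) < Real.exp (α * t) := by
      rw [Real.one_lt_exp_iff]; positivity
    exact div_pos (by linarith) (by positivity)

lemma muF_pos {α t : ℝ} (hα : 0 ≤ α) (ht : 0 < t) : 0 < muF t α := by
  rcases eq_or_lt_of_le hα with h | h
  · simp [muF, ← h]; positivity
  · simp only [muF, if_neg h.ne']
    have h1 : (1:ℝ) < Real.exp (α * t) := by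
      rw [Real.one_lt_exp_iff]; positivity
    exact div_pos (by positivity) (by linarith)

lemma muF_mul_betaF {α t : ℝ} (hα : 0 ≤ α) (ht : 0 < t) :
    muF t α * betaF t α = Real.exp (α * t) := by
  rcases eq_or_lt_of_le hα with h | h
  · simp [muF, betaF, ← h]
    exact ht.ne'
  · simp only [muF, betaF, if_neg h.ne']
    have h1 : (1:ℝ) < Real.exp (α * t) := by
      rw [Real.one_lt_exp_iff]; positivity
    have h2 : Real.exp (α * t) - 1 ≠ 0 := by linarith
    field_simp

lemma betaF_atTop {α : ℝ} (hα : 0 ≤ α) : Tendsto (fun t => betaF t α) atTop atTop := by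
  rcases eq_or_lt_of_le hα with h | h
  · simp only [betaF, ← h, if_pos rfl]
    exact tendsto_id.atTop_div_const (by norm_num)
  · simp only [betaF, if_neg h.ne']
    apply Tendsto.atTop_div_const (by positivity)
    apply tendsto_atTop_add_const_right
    exact Real.tendsto_exp_atTop.comp (Tendsto.const_mul_atTop h tendsto_id)

lemma sub_atTop (s : ℝ) : Tendsto (fun t : ℝ => t - s) atTop atTop := by
  simpa [sub_eq_add_neg] using tendsto_atTop_add_const_right atTop (-s) tendsto_id

lemma betaF_sub_atTop {α : ℝ} (hα : 0 ≤ α) (s : ℝ) :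
    Tendsto (fun t => betaF (t - s) α) atTop atTop :=
  (betaF_atTop hα).comp (sub_atTop s)

lemma ratio_tendsto {α : ℝ} (hα : 0 ≤ α) (s : ℝ) :
    Tendsto (fun t => betaF t α / betaF (t - s) α) atTop (nhds (Real.exp (α * s))) := by
  rcases eq_or_lt_of_le hα with h | h
  · have hlim : Tendsto (fun t : ℝ => 1 + s / (t - s)) atTop (nhds (1 + 0)) :=
      tendsto_const_nhds.add (tendsto_const_nhds.div_atTop (sub_atTop s))
    rw [← h]
    simp only [zero_mul, Real.exp_zero]
    apply Tendsto.congr' ?_ (by simpa using hlim)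
    filter_upwards [eventually_gt_atTop s] with t ht
    have hd : t - s ≠ 0 := by intro hc; linarith [sub_pos.mpr ht]
    simp only [betaF, ← h, if_pos rfl, if_true]
    field_simp
    ring
  · have hu : Tendsto (fun t => Real.exp (α * (t - s)) - 1) atTop atTop := by
      apply tendsto_atTop_add_const_right
      exact Real.tendsto_exp_atTop.comp ((Tendsto.const_mul_atTop h tendsto_id).comp (sub_atTop s))
    have hlim : Tendsto (fun t => Real.exp (α * s) + (Real.exp (α * s) - 1) / (Real.exp (α * (t - s)) - 1))
        atTop (nhds (Real.exp (α * s) + 0)) :=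
      tendsto_const_nhds.add (tendsto_const_nhds.div_atTop hu)
    apply Tendsto.congr' ?_ (by simpa using hlim)
    filter_upwards [eventually_gt_atTop s] with t ht
    have hd : 0 < t - s := sub_pos.mpr ht
    have h1 : (1:ℝ) < Real.exp (α * (t - s)) := by rw [Real.one_lt_exp_iff]; positivity
    have h2 : Real.exp (α * (t - s)) - 1 ≠ 0 := by linarith
    have he : Real.exp (α * s) * Real.exp (α * (t - s)) = Real.exp (α * t) := by
      rw [← Real.exp_add]; ring_nf
    simp only [betaF, if_neg h.ne']
    field_simp
    linear_combination he

theorem stmt11 (α s z x : ℝ) (hα : 0 ≤ α) (hs : 0 < s) (hz : 0 < z) (hx : 0 < x) :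
    Filter.Tendsto (fun t =>
        (1 / 2) * (muF s α ^ 2 * betaF t α * muF (t - s) α) /
            (betaF s α ^ 2 * muF t α * betaF (t - s) α) * (z * x) *
          Real.exp (-(z * UF t s α)) *
          Real.exp (-(x * (1 / betaF s α - 1 / betaF t α))))
      Filter.atTop
      (nhds ((muF s α / (2 * betaF s α)) * (x * Real.exp (-(x / betaF s α))) *
        (muF s α ^ 2 * z * Real.exp (-(z * muF s α))))) := by
  have hβs : 0 < betaF s α := betaF_pos hα hs
  have hμs : 0 < muF s α := muF_pos hα hs
  have hes := muF_mul_betaF hα hs   -- muF s α * betaF s α = exp (α * s)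
  -- limits of the pieces
  have hinv : Tendsto (fun t => 1 / betaF t α) atTop (nhds 0) := by
    simpa [one_div, Pi.inv_def] using (betaF_atTop hα).inv_tendsto_atTop
  have hinvd : Tendsto (fun t => 1 / betaF (t - s) α) atTop (nhds 0) := by
    simpa [one_div, Pi.inv_def] using (betaF_sub_atTop hα s).inv_tendsto_atTop
  have hq := ratio_tendsto hα s
  -- the surrogate function g
  set C : ℝ := (1 / 2) * (muF s α ^ 2 / betaF s α ^ 2) * Real.exp (-(α * s)) * (z * x) with hC
  have hg : Tendsto (fun t =>
      C * (betaF t α / betaF (t - s) α) ^ 2 *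
        Real.exp (-(z * (1 / betaF (t - s) α + muF s α))) *
        Real.exp (-(x * (1 / betaF s α - 1 / betaF t α)))) atTop
      (nhds (C * Real.exp (α * s) ^ 2 *
        Real.exp (-(z * (0 + muF s α))) * Real.exp (-(x * (1 / betaF s α - 0))))) := by
    refine (Tendsto.mul (Tendsto.mul ?_ ?_) ?_)
    · exact tendsto_const_nhds.mul (hq.pow 2)
    · exact (Real.continuous_exp.tendsto _).comp
        (((hinvd.add tendsto_const_nhds).const_mul z).neg)
    · exact (Real.continuous_exp.tendsto _).comp
        (((tendsto_const_nhds.sub hinv).const_mul x).neg)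
  have hval : C * Real.exp (α * s) ^ 2 * Real.exp (-(z * (0 + muF s α))) *
      Real.exp (-(x * (1 / betaF s α - 0))) =
      (muF s α / (2 * betaF s α)) * (x * Real.exp (-(x / betaF s α))) *
        (muF s α ^ 2 * z * Real.exp (-(z * muF s α))) := by
    rw [zero_add, sub_zero, mul_one_div, hC, Real.exp_neg, ← hes]
    field_simp
  rw [← hval]
  apply Tendsto.congr' ?_ hg
  filter_upwards [eventually_gt_atTop s, eventually_gt_atTop (0:ℝ)] with t ht ht0
  have hd : 0 < t - s := sub_pos.mpr ht
  have hbt : 0 < betaF t α := betaF_pos hα ht0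
  have hbd : 0 < betaF (t - s) α := betaF_pos hα hd
  have hmt : 0 < muF t α := muF_pos hα ht0
  have h1 := muF_mul_betaF hα ht0
  have h2 := muF_mul_betaF hα hd
  have he : Real.exp (α * (t - s)) * Real.exp (α * s) = Real.exp (α * t) := by
    rw [← Real.exp_add]; ring_nf
  have hmu_t : muF t α = Real.exp (α * t) / betaF t α := (eq_div_iff hbt.ne').mpr h1
  have hmu_d : muF (t - s) α = Real.exp (α * (t - s)) / betaF (t - s) α :=
    (eq_div_iff hbd.ne').mpr h2
  rw [UF, hC, hmu_t, hmu_d, Real.exp_neg, ← he]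
  have hE1 : Real.exp (α * (t - s)) ≠ 0 := Real.exp_ne_zero _
  have hE2 : Real.exp (α * s) ≠ 0 := Real.exp_ne_zero _
  field_simp
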